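/- Suppose that f is a real-valued function of the spherical angle θ ∈ [0, π] such that (sin θ)^{−1}((sin θ f)_θ)² is integrable on [0, π]. Then ∫_{0≤θ≤π} sin θ · f(θ)² dθ ≤ 2^{−1} ∫_{0≤θ≤π} (sin θ)^{−1} ((sin θ f)_θ)² dθ. -/

import Mathlib

/-!
Write `g = sin θ · f`, so the claim reads `2 ∫ g² / sin ≤ ∫ g'² / sin`. With the boundary term
`P = 2 cos θ · g² / sin² θ` one has the pointwise identity
`g'² / sin - 2 g² / sin - P' = (sin θ · g' - 2 cos θ · g)² / sin³ θ ≥ 0`,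
so integrating over `[a, b] ⊂ (0, π)` gives `2 ∫ₐᵇ g² / sin ≤ ∫ₐᵇ g'² / sin + P a - P b`.
Integrability of `g² / sin` forces `g` to take arbitrarily small values near `0` and `π`, and the
weighted Cauchy–Schwarz inequality `(∫ |g'|)² ≤ (∫ sin) (∫ g'² / sin)` then gives
`P a ≤ ∫₀ᵃ g'² / sin` and `-P b ≤ ∫_b^π g'² / sin`; letting `a → 0`, `b → π` finishes the proof.
-/

open MeasureTheory Real Set Filter Topology

lemma abs_le_half_mul_add_inv_mul_sq {w l : ℝ} (hw : 0 < w) (hl : 0 < l) (x : ℝ) :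
    |x| ≤ (l * w + w⁻¹ * x ^ 2 / l) / 2 := by
  have hx : w⁻¹ * x ^ 2 / l = |x| ^ 2 / (l * w) := by
    rw [sq_abs]; field_simp
  rw [hx, le_div_iff₀ two_pos, ← sub_nonneg]
  calc 0 ≤ (l * w - |x|) ^ 2 / (l * w) := by positivity
    _ = l * w + |x| ^ 2 / (l * w) - |x| * 2 := by field_simp; ring

lemma sq_le_mul_of_forall_le_half_add {x S Q : ℝ} (hx : 0 ≤ x) (hS : 0 < S) (hQ : 0 ≤ Q)
    (h : ∀ l > 0, x ≤ (l * S + Q / l) / 2) : x ^ 2 ≤ S * Q := by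
  rcases hx.eq_or_lt with rfl | hx
  · simpa using mul_nonneg hS.le hQ
  have := h (x / S) (by positivity)
  field_simp at this
  nlinarith

section WeightedCauchySchwarz

variable {a b : ℝ} {w G : ℝ → ℝ}

lemma IntervalIntegrable.of_inv_mul_sq (hab : a ≤ b) (hw : ∀ t ∈ Icc a b, 0 < w t)
    (hwi : IntervalIntegrable w volume a b) (hG : AEStronglyMeasurable G volume)
    (h : IntervalIntegrable (fun t => (w t)⁻¹ * G t ^ 2) volume a b) :
    IntervalIntegrable G volume a b := by
  refine ((hwi.add h).div_const 2).mono_fun' hG.restrict ?_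
  rw [uIoc_of_le hab]
  refine ae_restrict_of_forall_mem measurableSet_Ioc fun t ht => ?_
  simpa using abs_le_half_mul_add_inv_mul_sq (hw t (Ioc_subset_Icc_self ht)) one_pos (G t)

lemma sq_integral_abs_le_integral_mul_integral_inv_mul_sq (hab : a < b)
    (hw : ∀ t ∈ Icc a b, 0 < w t) (hwi : IntervalIntegrable w volume a b)
    (hG : AEStronglyMeasurable G volume)
    (h : IntervalIntegrable (fun t => (w t)⁻¹ * G t ^ 2) volume a b) :
    (∫ t in a..b, |G t|) ^ 2 ≤ (∫ t in a..b, w t) * ∫ t in a..b, (w t)⁻¹ * G t ^ 2 := by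
  have hGi := IntervalIntegrable.of_inv_mul_sq hab.le hw hwi hG h
  refine sq_le_mul_of_forall_le_half_add (intervalIntegral.integral_nonneg hab.le
    fun t _ => abs_nonneg _) (intervalIntegral.intervalIntegral_pos_of_pos_on hwi
    (fun t ht => hw t (Ioo_subset_Icc_self ht)) hab) (intervalIntegral.integral_nonneg hab.le
    fun t ht => mul_nonneg (inv_nonneg.2 (hw t ht).le) (sq_nonneg _)) fun l hl => ?_
  calc ∫ t in a..b, |G t|
      ≤ ∫ t in a..b, (l * w t + (w t)⁻¹ * G t ^ 2 / l) / 2 :=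
        intervalIntegral.integral_mono_on hab.le hGi.abs
          (((hwi.const_mul l).add (h.div_const l)).div_const 2)
          fun t ht => abs_le_half_mul_add_inv_mul_sq (hw t ht) hl (G t)
    _ = (l * (∫ t in a..b, w t) + (∫ t in a..b, (w t)⁻¹ * G t ^ 2) / l) / 2 := by
        rw [intervalIntegral.integral_div, intervalIntegral.integral_add (hwi.const_mul l)
          (h.div_const l), intervalIntegral.integral_const_mul, intervalIntegral.integral_div]

end WeightedCauchySchwarz

lemma exists_abs_lt_of_integrableOn_mul_sq {α : Type*} [MeasurableSpace α] {μ : Measure α}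
    {s : Set α} {φ g : α → ℝ} (hs : MeasurableSet s) (hφ0 : ∀ t ∈ s, 0 ≤ φ t)
    (hφm : AEStronglyMeasurable φ (μ.restrict s)) (hφ : ¬IntegrableOn φ s μ)
    (h : IntegrableOn (fun t => φ t * g t ^ 2) s μ) {c : ℝ} (hc : 0 < c) :
    ∃ t ∈ s, |g t| < c := by
  by_contra! hg
  refine hφ ((h.div_const (c ^ 2)).mono' hφm (ae_restrict_of_forall_mem hs fun t ht => ?_))
  rw [Real.norm_of_nonneg (hφ0 t ht), le_div_iff₀ (by positivity), ← sq_abs (g t)]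
  exact mul_le_mul_of_nonneg_left (pow_le_pow_left₀ hc.le (hg t ht) 2) (hφ0 t ht)

lemma not_integrableOn_inv_sin_Ioo_zero {θ : ℝ} (h0 : 0 < θ) (hπ : θ < π) :
    ¬IntegrableOn (fun t => (sin t)⁻¹) (Ioo 0 θ) := by
  intro h
  have hinv : IntegrableOn (fun t => t⁻¹) (Ioo 0 θ) := by
    refine h.mono' (by fun_prop) (ae_restrict_of_forall_mem measurableSet_Ioo fun t ht => ?_)
    rw [Real.norm_of_nonneg (inv_nonneg.2 ht.1.le)]
    exact inv_anti₀ (sin_pos_of_pos_of_lt_pi ht.1 (ht.2.trans hπ)) (sin_le ht.1.le)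
  have := (intervalIntegrable_iff_integrableOn_Ioo_of_le h0.le).2 hinv
  simp [intervalIntegrable_inv_iff, h0.ne, h0.le] at this

lemma not_integrableOn_inv_sin_Ioo_pi {θ : ℝ} (h0 : 0 < θ) (hπ : θ < π) :
    ¬IntegrableOn (fun t => (sin t)⁻¹) (Ioo θ π) := by
  intro h
  have hinv : IntegrableOn (fun t => (t - π)⁻¹) (Ioo θ π) := by
    refine h.mono' (by fun_prop) (ae_restrict_of_forall_mem measurableSet_Ioo fun t ht => ?_)
    rw [norm_inv, Real.norm_eq_abs, abs_sub_comm, abs_of_pos (sub_pos.2 ht.2)]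
    refine inv_anti₀ (sin_pos_of_pos_of_lt_pi (h0.trans ht.1) ht.2) ?_
    simpa only [sin_pi_sub] using sin_le (sub_nonneg.2 ht.2.le)
  have := (intervalIntegrable_iff_integrableOn_Ioo_of_le hπ.le).2 hinv
  simp [intervalIntegrable_sub_inv_iff, hπ.ne, hπ.le] at this

lemma sq_le_of_forall_exists_abs_lt {x M : ℝ} (h : ∀ c > 0, ∃ y, |y| < c ∧ (x - y) ^ 2 ≤ M) :
    x ^ 2 ≤ M := by
  have hM : 0 ≤ M := by
    obtain ⟨y, -, hy⟩ := h 1 one_pos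
    exact (sq_nonneg _).trans hy
  have hx : |x| ≤ √M := le_of_forall_pos_lt_add fun c hc => by
    obtain ⟨y, hy, hxy⟩ := h c hc
    calc |x| ≤ |y| + |x - y| := by simpa using abs_add_le y (x - y)
      _ < √M + c := by linarith [abs_le_sqrt hxy]
  calc x ^ 2 = |x| ^ 2 := (sq_abs x).symm
    _ ≤ √M ^ 2 := pow_le_pow_left₀ (abs_nonneg x) hx 2
    _ = M := sq_sqrt hM

lemma two_mul_mul_sq_div_le {c s y A : ℝ} (hs : s ≠ 0) (hcs : s ^ 2 + c ^ 2 = 1)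
    (hy : y ^ 2 ≤ (1 - c) * A) : 2 * c * y ^ 2 / s ^ 2 ≤ A := by
  have hA : 0 ≤ (1 - c) * A := (sq_nonneg y).trans hy
  have hc : c ≤ 1 := by nlinarith [sq_nonneg s]
  have hAs : A * s ^ 2 = (1 + c) * ((1 - c) * A) := by linear_combination A * hcs
  rw [div_le_iff₀ (by positivity), hAs]
  rcases le_or_gt 0 c with hc0 | hc0
  · nlinarith [mul_le_mul_of_nonneg_left hy hc0, mul_nonneg (sub_nonneg.2 hc) hA]
  · nlinarith [sq_nonneg y]

lemma tendsto_integral_add_sub {f : ℝ → ℝ} {a b : ℝ} (hab : a < b)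
    (hf : IntervalIntegrable f volume a b) :
    Tendsto (fun ε => ∫ t in (a + ε)..(b - ε), f t) (𝓝[>] 0) (𝓝 (∫ t in a..b, f t)) := by
  have hΦ := intervalIntegral.continuousOn_primitive_interval' hf left_mem_uIcc
  have hmem : ∀ᶠ ε in 𝓝[>] (0 : ℝ), a + ε ∈ uIcc a b ∧ b - ε ∈ uIcc a b := by
    filter_upwards [Ioo_mem_nhdsGT (sub_pos.2 hab)] with ε hε
    rw [uIcc_of_le hab.le]
    exact ⟨⟨by linarith [hε.1], by linarith [hε.2]⟩, ⟨by linarith [hε.2], by linarith [hε.1]⟩⟩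
  have hε : Tendsto (fun ε : ℝ => ε) (𝓝[>] 0) (𝓝 0) := nhdsWithin_le_nhds
  have hleft : Tendsto (fun ε => a + ε) (𝓝[>] 0) (𝓝[uIcc a b] a) :=
    tendsto_nhdsWithin_iff.2 ⟨by simpa using tendsto_const_nhds.add hε, hmem.mono fun _ h => h.1⟩
  have hright : Tendsto (fun ε => b - ε) (𝓝[>] 0) (𝓝[uIcc a b] b) :=
    tendsto_nhdsWithin_iff.2 ⟨by simpa using tendsto_const_nhds.sub hε, hmem.mono fun _ h => h.2⟩
  have hlim := ((hΦ b right_mem_uIcc).tendsto.comp hright).sub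
    ((hΦ a left_mem_uIcc).tendsto.comp hleft)
  simp only [Function.comp_def, intervalIntegral.integral_same, sub_zero] at hlim
  refine hlim.congr' (hmem.mono fun ε hε => ?_)
  exact intervalIntegral.integral_interval_sub_left (hf.mono_set (uIcc_subset_uIcc
    left_mem_uIcc hε.2)) (hf.mono_set (uIcc_subset_uIcc left_mem_uIcc hε.1))

lemma inv_sin_mul_sq_nonneg {t : ℝ} (ht : t ∈ Icc 0 π) (y : ℝ) : 0 ≤ (sin t)⁻¹ * y ^ 2 :=
  mul_nonneg (inv_nonneg.2 (sin_nonneg_of_nonneg_of_le_pi ht.1 ht.2)) (sq_nonneg y)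

noncomputable def hardyBoundaryTerm (g : ℝ → ℝ) (t : ℝ) : ℝ := 2 * cos t * g t ^ 2 / sin t ^ 2

lemma hasDerivAt_hardyBoundaryTerm {g : ℝ → ℝ} {g' t : ℝ} (hs : sin t ≠ 0)
    (hg : HasDerivAt g g' t) :
    HasDerivAt (hardyBoundaryTerm g)
      ((4 * cos t * g t * g' - 2 * sin t * g t ^ 2) / sin t ^ 2
        - 4 * cos t ^ 2 * g t ^ 2 / sin t ^ 3) t := by
  refine ((((hasDerivAt_cos t).const_mul 2).fun_mul (hg.fun_pow 2)).fun_div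
    ((hasDerivAt_sin t).fun_pow 2) (pow_ne_zero 2 hs)).congr_deriv ?_
  field_simp
  ring

lemma hardyBoundaryTerm_deriv_le {s c y z : ℝ} (hs : 0 < s) :
    (4 * c * y * z - 2 * s * y ^ 2) / s ^ 2 - 4 * c ^ 2 * y ^ 2 / s ^ 3
      ≤ s⁻¹ * z ^ 2 - 2 * (s⁻¹ * y ^ 2) := by
  have hgap : s⁻¹ * z ^ 2 - 2 * (s⁻¹ * y ^ 2)
      - ((4 * c * y * z - 2 * s * y ^ 2) / s ^ 2 - 4 * c ^ 2 * y ^ 2 / s ^ 3)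
      = (s * z - 2 * c * y) ^ 2 / s ^ 3 := by
    field_simp
    ring
  have : 0 ≤ (s * z - 2 * c * y) ^ 2 / s ^ 3 := by positivity
  linarith

lemma exists_abs_lt_of_integrable_inv_sin_mul_sq {g : ℝ → ℝ}
    (hr : IntervalIntegrable (fun t => (sin t)⁻¹ * g t ^ 2) volume 0 π) {θ c : ℝ}
    (hθ : θ ∈ Ioo 0 π) (hc : 0 < c) :
    (∃ δ ∈ Ioo 0 θ, |g δ| < c) ∧ ∃ δ ∈ Ioo θ π, |g δ| < c := by
  have hsin : ∀ {a b}, 0 ≤ a → b ≤ π → ∀ t ∈ Ioo a b, 0 ≤ (sin t)⁻¹ := fun ha hb t ht =>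
    inv_nonneg.2 (sin_nonneg_of_nonneg_of_le_pi (ha.trans ht.1.le) (ht.2.le.trans hb))
  have hr' : ∀ {a b}, 0 ≤ a → b ≤ π → IntegrableOn (fun t => (sin t)⁻¹ * g t ^ 2) (Ioo a b) :=
    fun ha hb => hr.1.mono_set (Ioo_subset_Ioc_self.trans (Ioc_subset_Ioc ha hb))
  exact ⟨exists_abs_lt_of_integrableOn_mul_sq measurableSet_Ioo (hsin le_rfl hθ.2.le)
      (by fun_prop) (not_integrableOn_inv_sin_Ioo_zero hθ.1 hθ.2) (hr' le_rfl hθ.2.le) hc,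
    exists_abs_lt_of_integrableOn_mul_sq measurableSet_Ioo (hsin hθ.1.le le_rfl)
      (by fun_prop) (not_integrableOn_inv_sin_Ioo_pi hθ.1 hθ.2) (hr' hθ.1.le le_rfl) hc⟩

section Hardy

variable {g : ℝ → ℝ} (hg : DifferentiableOn ℝ g (Ioo 0 π))
  (hq : IntervalIntegrable (fun t => (sin t)⁻¹ * deriv g t ^ 2) volume 0 π)
include hg hq

lemma sq_sub_le_mul_integral {δ θ : ℝ} (hδ : 0 < δ) (hδθ : δ ≤ θ) (hθ : θ < π) :
    (g θ - g δ) ^ 2 ≤ (cos δ - cos θ) * ∫ t in δ..θ, (sin t)⁻¹ * deriv g t ^ 2 := by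
  rcases hδθ.eq_or_lt with rfl | hlt
  · simp
  have hsub : Icc δ θ ⊆ Ioo 0 π := Icc_subset_Ioo hδ hθ
  have hsin : ∀ t ∈ Icc δ θ, 0 < sin t := fun t ht =>
    sin_pos_of_pos_of_lt_pi (hsub ht).1 (hsub ht).2
  have hqδθ : IntervalIntegrable (fun t => (sin t)⁻¹ * deriv g t ^ 2) volume δ θ :=
    hq.mono_set (by
      rw [uIcc_of_le hδθ, uIcc_of_le pi_pos.le]
      exact hsub.trans Ioo_subset_Icc_self)
  have hG := (measurable_deriv g).aestronglyMeasurable (μ := volume)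
  have hftc : ∫ t in δ..θ, deriv g t = g θ - g δ := by
    refine intervalIntegral.integral_eq_sub_of_hasDerivAt (fun t ht => ?_)
      (IntervalIntegrable.of_inv_mul_sq hδθ hsin (continuous_sin.intervalIntegrable _ _) hG hqδθ)
    rw [uIcc_of_le hδθ] at ht
    exact (hg.differentiableAt (isOpen_Ioo.mem_nhds (hsub ht))).hasDerivAt
  rw [← hftc, ← integral_sin, ← sq_abs]
  calc |∫ t in δ..θ, deriv g t| ^ 2 ≤ (∫ t in δ..θ, |deriv g t|) ^ 2 :=
        pow_le_pow_left₀ (abs_nonneg _) (intervalIntegral.abs_integral_le_integral_abs hδθ) 2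
    _ ≤ _ := sq_integral_abs_le_integral_mul_integral_inv_mul_sq hlt hsin
        (continuous_sin.intervalIntegrable _ _) hG hqδθ

lemma hardyBoundaryTerm_le_integral_left
    (hr : IntervalIntegrable (fun t => (sin t)⁻¹ * g t ^ 2) volume 0 π) {θ : ℝ}
    (hθ : θ ∈ Ioo 0 π) :
    hardyBoundaryTerm g θ ≤ ∫ t in 0..θ, (sin t)⁻¹ * deriv g t ^ 2 := by
  refine two_mul_mul_sq_div_le (sin_pos_of_pos_of_lt_pi hθ.1 hθ.2).ne' (sin_sq_add_cos_sq θ)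
    (sq_le_of_forall_exists_abs_lt fun c hc => ?_)
  obtain ⟨δ, hδ, hgδ⟩ := (exists_abs_lt_of_integrable_inv_sin_mul_sq hr hθ hc).1
  refine ⟨g δ, hgδ, (sq_sub_le_mul_integral hg hq hδ.1 hδ.2.le hθ.2).trans ?_⟩
  refine mul_le_mul (by linarith [cos_le_one δ]) ?_
    (intervalIntegral.integral_nonneg hδ.2.le fun t ht => inv_sin_mul_sq_nonneg
      ⟨hδ.1.le.trans ht.1, ht.2.trans hθ.2.le⟩ _) (by linarith [cos_le_one θ])
  exact intervalIntegral.integral_mono_interval hδ.1.le hδ.2.le le_rfl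
    (ae_restrict_of_forall_mem measurableSet_Ioc fun t ht =>
      inv_sin_mul_sq_nonneg ⟨ht.1.le, ht.2.trans hθ.2.le⟩ _)
    (hq.mono_set (uIcc_subset_uIcc left_mem_uIcc (uIcc_of_le pi_pos.le ▸ Ioo_subset_Icc_self hθ)))

lemma neg_hardyBoundaryTerm_le_integral_right
    (hr : IntervalIntegrable (fun t => (sin t)⁻¹ * g t ^ 2) volume 0 π) {θ : ℝ}
    (hθ : θ ∈ Ioo 0 π) :
    -hardyBoundaryTerm g θ ≤ ∫ t in θ..π, (sin t)⁻¹ * deriv g t ^ 2 := by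
  have hcs : sin θ ^ 2 + (-cos θ) ^ 2 = 1 := by rw [neg_sq, sin_sq_add_cos_sq]
  rw [hardyBoundaryTerm, ← neg_div, ← neg_mul, ← neg_mul, neg_mul_comm]
  refine two_mul_mul_sq_div_le (sin_pos_of_pos_of_lt_pi hθ.1 hθ.2).ne' hcs
    (sq_le_of_forall_exists_abs_lt fun c hc => ?_)
  obtain ⟨δ, hδ, hgδ⟩ := (exists_abs_lt_of_integrable_inv_sin_mul_sq hr hθ hc).2
  refine ⟨g δ, hgδ, ?_⟩
  rw [← neg_sub, neg_sq, sub_neg_eq_add]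
  refine (sq_sub_le_mul_integral hg hq hθ.1 hδ.1.le hδ.2).trans ?_
  refine mul_le_mul (by linarith [neg_one_le_cos δ]) ?_
    (intervalIntegral.integral_nonneg hδ.1.le fun t ht => inv_sin_mul_sq_nonneg
      ⟨hθ.1.le.trans ht.1, ht.2.trans hδ.2.le⟩ _) (by linarith [neg_one_le_cos θ])
  exact intervalIntegral.integral_mono_interval le_rfl hδ.1.le hδ.2.le
    (ae_restrict_of_forall_mem measurableSet_Ioc fun t ht =>
      inv_sin_mul_sq_nonneg ⟨hθ.1.le.trans ht.1.le, ht.2⟩ _)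
    (hq.mono_set (uIcc_subset_uIcc (uIcc_of_le pi_pos.le ▸ Ioo_subset_Icc_self hθ) right_mem_uIcc))

lemma two_mul_integral_le_add_hardyBoundaryTerm {a b : ℝ} (ha : 0 < a) (hab : a ≤ b) (hb : b < π) :
    2 * ∫ t in a..b, (sin t)⁻¹ * g t ^ 2
      ≤ (∫ t in a..b, (sin t)⁻¹ * deriv g t ^ 2) + hardyBoundaryTerm g a
        - hardyBoundaryTerm g b := by
  have hsub : Icc a b ⊆ Ioo 0 π := Icc_subset_Ioo ha hb
  have hsin : ∀ t ∈ Icc a b, 0 < sin t := fun t ht =>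
    sin_pos_of_pos_of_lt_pi (hsub ht).1 (hsub ht).2
  have hderiv : ∀ t ∈ Icc a b, HasDerivAt (hardyBoundaryTerm g) _ t := fun t ht =>
    hasDerivAt_hardyBoundaryTerm (hsin t ht).ne'
      (hg.differentiableAt (isOpen_Ioo.mem_nhds (hsub ht))).hasDerivAt
  have hr : IntervalIntegrable (fun t => (sin t)⁻¹ * g t ^ 2) volume a b := by
    refine ContinuousOn.intervalIntegrable ?_
    rw [uIcc_of_le hab]
    exact (continuousOn_sin.inv₀ fun t ht => (hsin t ht).ne').mul
      ((hg.continuousOn.mono hsub).pow 2)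
  have hqab : IntervalIntegrable (fun t => (sin t)⁻¹ * deriv g t ^ 2) volume a b :=
    hq.mono_set (by
      rw [uIcc_of_le hab, uIcc_of_le pi_pos.le]
      exact hsub.trans Ioo_subset_Icc_self)
  have hftc := intervalIntegral.sub_le_integral_of_hasDeriv_right_of_le hab
    (fun t ht => (hderiv t ht).continuousAt.continuousWithinAt)
    (fun t ht => (hderiv t (Ioo_subset_Icc_self ht)).hasDerivWithinAt)
    ((intervalIntegrable_iff_integrableOn_Icc_of_le hab).1 (hqab.sub (hr.const_mul 2)))
    (fun t ht => hardyBoundaryTerm_deriv_le (hsin t (Ioo_subset_Icc_self ht)))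
  rw [intervalIntegral.integral_sub hqab (hr.const_mul 2),
    intervalIntegral.integral_const_mul] at hftc
  linarith

lemma two_mul_integral_le_integral
    (hr : IntervalIntegrable (fun t => (sin t)⁻¹ * g t ^ 2) volume 0 π)
    {a b : ℝ} (ha : 0 < a) (hab : a ≤ b) (hb : b < π) :
    2 * ∫ t in a..b, (sin t)⁻¹ * g t ^ 2 ≤ ∫ t in 0..π, (sin t)⁻¹ * deriv g t ^ 2 := by
  have hmem : ∀ {x}, 0 ≤ x → x ≤ π → x ∈ uIcc 0 π := fun h0 hπ => by
    rw [uIcc_of_le pi_pos.le]; exact ⟨h0, hπ⟩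
  have ha' := hmem ha.le (hab.trans hb.le)
  have hb' := hmem (ha.le.trans hab) hb.le
  have hqI : ∀ {x y}, x ∈ uIcc 0 π → y ∈ uIcc 0 π →
      IntervalIntegrable (fun t => (sin t)⁻¹ * deriv g t ^ 2) volume x y :=
    fun hx hy => hq.mono_set (uIcc_subset_uIcc hx hy)
  have hsplit₁ := intervalIntegral.integral_add_adjacent_intervals
    (hqI left_mem_uIcc ha') (hqI ha' right_mem_uIcc)
  have hsplit₂ := intervalIntegral.integral_add_adjacent_intervals
    (hqI ha' hb') (hqI hb' right_mem_uIcc)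
  have := two_mul_integral_le_add_hardyBoundaryTerm hg hq ha hab hb
  have := hardyBoundaryTerm_le_integral_left hg hq hr ⟨ha, hab.trans_lt hb⟩
  have := neg_hardyBoundaryTerm_le_integral_right hg hq hr ⟨ha.trans_le hab, hb⟩
  linarith

theorem two_mul_integral_inv_sin_mul_sq_le :
    2 * ∫ t in 0..π, (sin t)⁻¹ * g t ^ 2 ≤ ∫ t in 0..π, (sin t)⁻¹ * deriv g t ^ 2 := by
  by_cases hr : IntervalIntegrable (fun t => (sin t)⁻¹ * g t ^ 2) volume 0 π
  · refine le_of_tendsto ((tendsto_integral_add_sub pi_pos hr).const_mul 2) ?_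
    filter_upwards [Ioo_mem_nhdsGT (half_pos pi_pos)] with ε hε
    rw [zero_add]
    exact two_mul_integral_le_integral hg hq hr hε.1 (by linarith [hε.2]) (by linarith [hε.1])
  -- This case does occur, e.g. for `g = 1`, and holds only through the junk value `0`.
  · rw [intervalIntegral.integral_undef hr, mul_zero]
    exact intervalIntegral.integral_nonneg pi_pos.le fun t ht => inv_sin_mul_sq_nonneg ht _

end Hardy

/-- third inequality of (21): for a differentiable function f of the
spherical angle θ ∈ [0,π] with (sin θ)⁻¹((sin θ f)_θ)² integrable,
∫ sin θ f² dθ ≤ 2⁻¹ ∫ (sin θ)⁻¹ ((sin θ f)_θ)² dθ. -/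
theorem statement17 (f : ℝ → ℝ)
    (hf : DifferentiableOn ℝ f (Set.Ioo 0 π))
    (hint : IntegrableOn
      (fun θ => (Real.sin θ)⁻¹ * (deriv (fun t => Real.sin t * f t) θ) ^ 2)
      (Set.Icc 0 π)) :
    (∫ θ in Set.Icc (0 : ℝ) π, Real.sin θ * f θ ^ 2) ≤
      2⁻¹ * ∫ θ in Set.Icc (0 : ℝ) π,
        (Real.sin θ)⁻¹ * (deriv (fun t => Real.sin t * f t) θ) ^ 2 := by
  have hsin : ∀ θ, sin θ * f θ ^ 2 = (sin θ)⁻¹ * (sin θ * f θ) ^ 2 := fun θ => by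
    rcases eq_or_ne (sin θ) 0 with h | h
    · simp [h]
    · field_simp
  have hardy := two_mul_integral_inv_sin_mul_sq_le (g := fun t => sin t * f t)
    (differentiable_sin.differentiableOn.mul hf)
    ((intervalIntegrable_iff_integrableOn_Icc_of_le pi_pos.le).2 hint)
  simp only [hsin, integral_Icc_eq_integral_Ioc, ← intervalIntegral.integral_of_le pi_pos.le]
  linarith
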